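/- arXiv:0803.3489 — 2 statements merged into one kernel-verified Lean document; each statement's English description precedes it below -/
import Mathlib

section
/- For any A, B in SL(3,C), tr(ABA^{-1}B^{-1}) + tr(BAB^{-1}A^{-1}) is a polynomial in the eight traces tr(A), tr(A^{-1}), tr(B), tr(B^{-1}), tr(AB), tr(A^{-1}B^{-1}), tr(AB^{-1}), tr(A^{-1}B). -/
/-!
On `SL(3)` the inverse is the adjugate. For arbitrary `3 × 3` matrices over a commutative ring,
`tr (A B adj A adj B) + tr (B A adj B adj A)` is a polynomial in `tr A`, `tr adj A`, `tr B`,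
`tr adj B`, `tr AB`, `tr (adj A adj B)`, `tr (A adj B)`, `tr (adj A B)` with coefficients in
`ℤ[det A, det B]`, as expanding both sides in the eighteen entries shows; setting both
determinants to `1` gives the polynomial.
-/

open Matrix

namespace Matrix

theorem inv_eq_adjugate_of_det_eq_one {n R : Type*} [Fintype n] [DecidableEq n] [CommRing R]
    {A : Matrix n n R} (h : A.det = 1) : A⁻¹ = A.adjugate :=
  inv_eq_left_inv (by rw [adjugate_mul, h, one_smul])

variable {R : Type*} [CommRing R]

theorem trace_mul_mul_adjugate_mul_adjugate_add_fin_three (A B : Matrix (Fin 3) (Fin 3) R) :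
    trace (A * B * A.adjugate * B.adjugate) + trace (B * A * B.adjugate * A.adjugate) =
      trace A * trace A.adjugate * trace B * trace B.adjugate
        + B.det * (trace A * trace A.adjugate) + A.det * (trace B * trace B.adjugate)
        + trace (A * B) * trace (A.adjugate * B.adjugate)
        + trace (A * B.adjugate) * trace (A.adjugate * B)
        - trace A.adjugate * trace B.adjugate * trace (A * B)
        - trace A.adjugate * trace B * trace (A * B.adjugate)
        - trace A * trace B.adjugate * trace (A.adjugate * B)
        - trace A * trace B * trace (A.adjugate * B.adjugate)
        - 3 * (A.det * B.det) := by
  simp only [trace_fin_three, mul_apply, Fin.sum_univ_three, adjugate_fin_three, det_fin_three,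
    of_apply, cons_val', cons_val_zero, cons_val_one, cons_val_two, empty_val', cons_val_fin_one,
    head_cons, tail_cons, head_fin_const]
  ring

variable (R) in
open MvPolynomial in
noncomputable def sl3CommutatorTracePoly : MvPolynomial (Fin 8) R :=
  X 0 * X 1 * X 2 * X 3 + X 0 * X 1 + X 2 * X 3 + X 4 * X 5 + X 6 * X 7
    - X 1 * X 3 * X 4 - X 1 * X 2 * X 6 - X 0 * X 3 * X 7 - X 0 * X 2 * X 5 - 3

theorem trace_commutator_add_eq_eval_sl3CommutatorTracePoly {A B : Matrix (Fin 3) (Fin 3) R}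
    (hA : A.det = 1) (hB : B.det = 1) :
    trace (A * B * A⁻¹ * B⁻¹) + trace (B * A * B⁻¹ * A⁻¹) =
      MvPolynomial.eval
        ![trace A, trace A⁻¹, trace B, trace B⁻¹, trace (A * B),
          trace (A⁻¹ * B⁻¹), trace (A * B⁻¹), trace (A⁻¹ * B)] (sl3CommutatorTracePoly R) := by
  rw [inv_eq_adjugate_of_det_eq_one hA, inv_eq_adjugate_of_det_eq_one hB,
    trace_mul_mul_adjugate_mul_adjugate_add_fin_three, hA, hB]
  simp only [sl3CommutatorTracePoly, map_sub, map_add, map_mul, MvPolynomial.eval_X,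
    MvPolynomial.eval_ofNat, cons_val]
  ring

end Matrix

theorem stmt_2 :
    ∃ P : MvPolynomial (Fin 8) ℂ,
      ∀ A B : Matrix (Fin 3) (Fin 3) ℂ, A.det = 1 → B.det = 1 →
        trace (A * B * A⁻¹ * B⁻¹) + trace (B * A * B⁻¹ * A⁻¹) =
          MvPolynomial.eval
            ![trace A, trace A⁻¹, trace B, trace B⁻¹, trace (A * B),
              trace (A⁻¹ * B⁻¹), trace (A * B⁻¹), trace (A⁻¹ * B)] P :=
  ⟨sl3CommutatorTracePoly ℂ, fun _ _ hA hB =>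
    trace_commutator_add_eq_eval_sl3CommutatorTracePoly hA hB⟩
end

section
/- For all A, B in SL(3,C): tr(A^{-1}BA^{-1}B^{-1}) = tr(A^{-1}B)·tr(A^{-1}B^{-1}) + tr(A) + tr(AB)·tr(B^{-1}) − tr(A)·tr(B)·tr(B^{-1}) + tr(B)·tr(AB^{-1}). -/
/-!
Polarizing the Cayley–Hamilton identity of a `3 × 3` matrix `X` in the direction `Y`, taking
`X = A⁻¹`, `Y = B`, multiplying on the right by `B⁻¹` and taking traces produces the word
`A⁻¹ B A⁻¹ B⁻¹` together with words in which `B` and `B⁻¹` cancel up to conjugation. Since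
`det A = 1`, the adjugate of `A⁻¹` is `A`, and Cayley–Hamilton for `A⁻¹` expresses the remaining
words `A⁻²` and `A⁻² B⁻¹` through `A`, `A⁻¹`, `A B⁻¹` and `A⁻¹ B⁻¹`.
-/

open Matrix

namespace Matrix

variable {R : Type*} [CommRing R]

theorem adjugate_fin_three_eq_cayleyHamilton (X : Matrix (Fin 3) (Fin 3) R) :
    X.adjugate = X * X - trace X • X + trace X.adjugate • 1 := by
  ext i j
  fin_cases i <;> fin_cases j <;>
    simp [adjugate_fin_three, trace_fin_three, mul_apply, Fin.sum_univ_three] <;> ring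

/-- The derivative of `X ↦ X³ - tr X • X² + tr (adj X) • X - det X • 1` in the direction `Y`. -/
theorem polarized_cayleyHamilton_fin_three (X Y : Matrix (Fin 3) (Fin 3) R) :
    X * X * Y + X * Y * X + Y * X * X - trace X • (X * Y + Y * X) - trace Y • (X * X)
      + (trace X * trace Y - trace (X * Y)) • X + trace X.adjugate • Y
      - trace (X.adjugate * Y) • 1 = 0 := by
  ext i j
  fin_cases i <;> fin_cases j <;>
    simp [adjugate_fin_three, trace_fin_three, mul_apply, vecMul, dotProduct, Fin.sum_univ_three] <;>
    ring

theorem adjugate_inv_of_det_eq_one {n : Type*} [Fintype n] [DecidableEq n] [Nontrivial n]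
    {A : Matrix n n R} (hA : A.det = 1) : A⁻¹.adjugate = A := by
  rw [inv_def, hA, Ring.inverse_one, one_smul, adjugate_adjugate', hA, one_pow, one_smul]

end Matrix

theorem stmt_4 (A B : Matrix (Fin 3) (Fin 3) ℂ) (hA : A.det = 1) (hB : B.det = 1) :
    trace (A⁻¹ * B * A⁻¹ * B⁻¹) =
      trace (A⁻¹ * B) * trace (A⁻¹ * B⁻¹) + trace A + trace (A * B) * trace B⁻¹
        - trace A * trace B * trace B⁻¹ + trace B * trace (A * B⁻¹) := by
  have hB_unit : IsUnit B := (isUnit_iff_isUnit_det B).2 (by simp [hB])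
  have hA_eq : A = A⁻¹ * A⁻¹ - trace A⁻¹ • A⁻¹ + trace A • 1 := by
    simpa only [adjugate_inv_of_det_eq_one hA] using adjugate_fin_three_eq_cayleyHamilton A⁻¹
  have hA_tr := congrArg trace hA_eq
  have hAB_tr := congrArg (fun M => trace (M * B⁻¹)) hA_eq
  have hpol := congrArg (fun M => trace (M * B⁻¹)) (polarized_cayleyHamilton_fin_three A⁻¹ B)
  have hconj_sq : trace (B * (A⁻¹ * (A⁻¹ * B⁻¹))) = trace (A⁻¹ * A⁻¹) := by
    simpa only [Matrix.mul_assoc] using trace_conj hB_unit (A⁻¹ * A⁻¹)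
  have hconj : trace (B * (A⁻¹ * B⁻¹)) = trace A⁻¹ := by
    simpa only [Matrix.mul_assoc] using trace_conj hB_unit A⁻¹
  simp only [adjugate_inv_of_det_eq_one hA, sub_mul, add_mul, smul_mul, mul_add, trace_sub,
    trace_add, trace_smul, Matrix.mul_assoc, mul_nonsing_inv B (by simp [hB]), Matrix.mul_one,
    Matrix.one_mul, Matrix.zero_mul, smul_eq_mul, trace_one, Fintype.card_fin, trace_zero,
    hconj_sq, hconj] at hpol hA_tr hAB_tr ⊢
  linear_combination hpol + 2 * hA_tr - trace B * hAB_tr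
end
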